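/- Let ρ : G → ℤ_p^× be a continuous homomorphism from a profinite group G. For any integer d ≥ 1, there exists an open subgroup H ≤ G and a continuous homomorphism ρ_{1/d} : H → ℚ_p^× with ρ_{1/d}(σ)^d = ρ(σ) for all σ ∈ H. -/

import Mathlib

/-!
Hensel's lemma applied to `X ^ d - c` at `1`, whose derivative there is `d`, gives every
`c ∈ ℤ_[p]` with `‖c - 1‖ < ‖d‖ ^ 2` a unique `d`-th root `z` with `‖z - 1‖ < ‖d‖`. Uniqueness
makes `c ↦ z` multiplicative on the subgroup of such units, and the identity
`‖z ^ d - w ^ d‖ = ‖d‖ * ‖z - w‖` for `z, w` this close to `1` makes it Lipschitz, hence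
continuous. Pulling this subgroup back along `ρ` gives `H`, and `ρ_{1/d}` is the root of `ρ`.
-/

open Polynomial

namespace PadicInt

variable {p : ℕ} [Fact p.Prime]

theorem norm_mul_sub_one_le (x y : ℤ_[p]) : ‖x * y - 1‖ ≤ max ‖x - 1‖ ‖y - 1‖ := by
  calc ‖x * y - 1‖ = ‖x * (y - 1) + (x - 1)‖ := by ring_nf
    _ ≤ max ‖x * (y - 1)‖ ‖x - 1‖ := nonarchimedean _ _
    _ ≤ max ‖y - 1‖ ‖x - 1‖ := by
      gcongr
      exact (norm_mul_le _ _).trans (mul_le_of_le_one_left (norm_nonneg _) (norm_le_one x))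
    _ = max ‖x - 1‖ ‖y - 1‖ := max_comm _ _

theorem norm_pow_sub_one_le (x : ℤ_[p]) (n : ℕ) : ‖x ^ n - 1‖ ≤ ‖x - 1‖ := by
  induction n with
  | zero => simp
  | succ n ih => exact pow_succ x n ▸ (norm_mul_sub_one_le _ _).trans (max_le ih le_rfl)

theorem norm_units_inv_sub_one (u : ℤ_[p]ˣ) :
    ‖((u⁻¹ : ℤ_[p]ˣ) : ℤ_[p]) - 1‖ = ‖(u : ℤ_[p]) - 1‖ := by
  calc ‖((u⁻¹ : ℤ_[p]ˣ) : ℤ_[p]) - 1‖ = ‖((u⁻¹ : ℤ_[p]ˣ) : ℤ_[p]) * (1 - u)‖ := by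
        rw [mul_sub, mul_one, Units.inv_mul]
    _ = ‖(u : ℤ_[p]) - 1‖ := by rw [norm_mul, norm_units, one_mul, norm_sub_rev]

theorem norm_pow_sub_pow {d : ℕ} {z w : ℤ_[p]} (hz : ‖z - 1‖ < ‖(d : ℤ_[p])‖)
    (hw : ‖w - 1‖ < ‖(d : ℤ_[p])‖) : ‖z ^ d - w ^ d‖ = ‖(d : ℤ_[p])‖ * ‖z - w‖ := by
  set S := ∑ i ∈ Finset.range d, z ^ i * w ^ (d - 1 - i)
  have hS_sub : ‖S - d‖ < ‖(d : ℤ_[p])‖ := by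
    have hS : S - d = ∑ i ∈ Finset.range d, (z ^ i * w ^ (d - 1 - i) - 1) := by simp [S]
    refine hS ▸ lt_of_le_of_lt ?_ (max_lt hz hw)
    refine IsUltrametricDist.norm_sum_le_of_forall_le_of_nonneg (by positivity) fun i _ => ?_
    exact (norm_mul_sub_one_le _ _).trans
      (max_le_max (norm_pow_sub_one_le _ _) (norm_pow_sub_one_le _ _))
  have hS_norm : ‖S‖ = ‖(d : ℤ_[p])‖ := by
    rw [← sub_add_cancel S d, norm_add_eq_max_of_ne hS_sub.ne, max_eq_right hS_sub.le]
  rw [← geom_sum₂_mul, norm_mul, hS_norm]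

theorem existsUnique_pow_eq_of_norm_sub_one_lt {d : ℕ} {c : ℤ_[p]}
    (hc : ‖c - 1‖ < ‖(d : ℤ_[p])‖ ^ 2) :
    ∃! z : ℤ_[p], z ^ d = c ∧ ‖z - 1‖ < ‖(d : ℤ_[p])‖ := by
  have hroot (z : ℤ_[p]) : (X ^ d - C c).aeval z = 0 ↔ z ^ d = c := by simp [sub_eq_zero]
  have hderiv : (X ^ d - C c).derivative.aeval (1 : ℤ_[p]) = (d : ℤ_[p]) := by
    simp [derivative_X_pow]
  have hF : ‖(X ^ d - C c).aeval (1 : ℤ_[p])‖ <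
      ‖(X ^ d - C c).derivative.aeval (1 : ℤ_[p])‖ ^ 2 := by
    rw [hderiv]; simpa [norm_sub_rev] using hc
  obtain ⟨z, hz, hz1, -, huniq⟩ := hensels_lemma hF
  rw [hderiv] at hz1 huniq
  exact ⟨z, ⟨(hroot z).1 hz, hz1⟩, fun w hw => huniq w ((hroot w).2 hw.1) hw.2⟩

variable (p) in
/-- Junk value `1` outside the disc `‖c - 1‖ < ‖d‖ ^ 2`. -/
noncomputable def nthRootNearOne (d : ℕ) (c : ℤ_[p]) : ℤ_[p] :=
  if hc : ‖c - 1‖ < ‖(d : ℤ_[p])‖ ^ 2 then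
    (existsUnique_pow_eq_of_norm_sub_one_lt hc).exists.choose
  else 1

theorem nthRootNearOne_spec {d : ℕ} {c : ℤ_[p]} (hc : ‖c - 1‖ < ‖(d : ℤ_[p])‖ ^ 2) :
    nthRootNearOne p d c ^ d = c ∧ ‖nthRootNearOne p d c - 1‖ < ‖(d : ℤ_[p])‖ := by
  rw [nthRootNearOne, dif_pos hc]
  exact (existsUnique_pow_eq_of_norm_sub_one_lt hc).exists.choose_spec

theorem eq_nthRootNearOne {d : ℕ} {c z : ℤ_[p]} (hc : ‖c - 1‖ < ‖(d : ℤ_[p])‖ ^ 2)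
    (hz : z ^ d = c) (hz1 : ‖z - 1‖ < ‖(d : ℤ_[p])‖) : z = nthRootNearOne p d c :=
  (existsUnique_pow_eq_of_norm_sub_one_lt hc).unique ⟨hz, hz1⟩ (nthRootNearOne_spec hc)

theorem nthRootNearOne_one {d : ℕ} [NeZero d] : nthRootNearOne p d (1 : ℤ_[p]) = 1 :=
  (eq_nthRootNearOne (by simp [NeZero.ne]) (one_pow d) (by simp [NeZero.ne])).symm

theorem nthRootNearOne_mul {d : ℕ} {c c' : ℤ_[p]} (hc : ‖c - 1‖ < ‖(d : ℤ_[p])‖ ^ 2)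
    (hc' : ‖c' - 1‖ < ‖(d : ℤ_[p])‖ ^ 2) :
    nthRootNearOne p d (c * c') = nthRootNearOne p d c * nthRootNearOne p d c' := by
  obtain ⟨hz, hz1⟩ := nthRootNearOne_spec hc
  obtain ⟨hz', hz1'⟩ := nthRootNearOne_spec hc'
  exact (eq_nthRootNearOne ((norm_mul_sub_one_le _ _).trans_lt (max_lt hc hc'))
    (by rw [mul_pow, hz, hz']) ((norm_mul_sub_one_le _ _).trans_lt (max_lt hz1 hz1'))).symm

variable (p) in
theorem lipschitzOnWith_nthRootNearOne (d : ℕ) :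
    LipschitzOnWith ‖(d : ℤ_[p])‖₊⁻¹ (nthRootNearOne p d)
      {c : ℤ_[p] | ‖c - 1‖ < ‖(d : ℤ_[p])‖ ^ 2} := by
  refine LipschitzOnWith.of_dist_le_mul fun c hc c' hc' => ?_
  obtain ⟨hz, hz1⟩ := nthRootNearOne_spec hc
  obtain ⟨hz', hz1'⟩ := nthRootNearOne_spec hc'
  have hd : 0 < ‖(d : ℤ_[p])‖ := (norm_nonneg _).trans_lt hz1
  have hpow := norm_pow_sub_pow hz1 hz1'
  rw [hz, hz'] at hpow
  rw [dist_eq_norm, dist_eq_norm, NNReal.coe_inv, coe_nnnorm, hpow, inv_mul_cancel_left₀ hd.ne']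

section

variable (p) (d : ℕ) [NeZero d]

def nthRootDomain : Subgroup ℤ_[p]ˣ where
  carrier := {u | ‖(u : ℤ_[p]) - 1‖ < ‖(d : ℤ_[p])‖ ^ 2}
  one_mem' := by simp [NeZero.ne]
  mul_mem' hu hv := (norm_mul_sub_one_le _ _).trans_lt (max_lt hu hv)
  inv_mem' hu := (norm_units_inv_sub_one _).trans_lt hu

theorem isOpen_nthRootDomain : IsOpen (nthRootDomain p d : Set ℤ_[p]ˣ) :=
  isOpen_lt (f := fun u : ℤ_[p]ˣ => ‖(u : ℤ_[p]) - 1‖) (by fun_prop) continuous_const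

noncomputable def nthRootHom : nthRootDomain p d →* ℤ_[p]ˣ :=
  MonoidHom.toHomUnits
    { toFun u := nthRootNearOne p d ((u : ℤ_[p]ˣ) : ℤ_[p])
      map_one' := nthRootNearOne_one
      map_mul' u v := nthRootNearOne_mul u.2 v.2 }

theorem nthRootHom_pow (u : nthRootDomain p d) : nthRootHom p d u ^ d = u :=
  Units.ext (nthRootNearOne_spec u.2).1

theorem continuous_nthRootHom : Continuous (nthRootHom p d) := by
  have hval : Continuous fun u : nthRootDomain p d => (nthRootHom p d u : ℤ_[p]) :=
    (lipschitzOnWith_nthRootNearOne p d).continuousOn.comp_continuous (by fun_prop) fun u => u.2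
  refine Units.continuous_iff.2 ⟨hval, ?_⟩
  simp_rw [← map_inv]
  exact hval.comp continuous_inv

end

end PadicInt

open PadicInt in
theorem exists_continuous_dth_root_of_character_general
    (p : ℕ) [Fact p.Prime]
    (G : Type*) [Group G] [TopologicalSpace G]
    (ρ : G →* ℤ_[p]ˣ) (hρ : Continuous ρ) (d : ℕ) (hd : 1 ≤ d) :
    ∃ H : Subgroup G, IsOpen (H : Set G) ∧
      ∃ f : H →* ℚ_[p]ˣ, Continuous f ∧
        ∀ σ : H,
          (f σ) ^ d =
            Units.map (PadicInt.Coe.ringHom : ℤ_[p] →+* ℚ_[p]).toMonoidHom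
              (ρ (σ : G)) := by
  have : NeZero d := ⟨by omega⟩
  refine ⟨(nthRootDomain p d).comap ρ, (isOpen_nthRootDomain p d).preimage hρ,
    (Units.map Coe.ringHom.toMonoidHom).comp ((nthRootHom p d).comp (ρ.subgroupComap _)),
    ?_, fun σ => ?_⟩
  · exact (Units.continuous_map continuous_subtype_val).comp
      ((continuous_nthRootHom p d).comp
        ((hρ.comp continuous_subtype_val).subtype_mk fun σ => σ.2))
  · rw [MonoidHom.comp_apply, ← map_pow, MonoidHom.comp_apply, nthRootHom_pow]
    rfl

/-- Fractional Tate twists: let `ρ : G → ℤ_p^×` be a continuous homomorphism from a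
profinite group `G`.  For any integer `d ≥ 1` there exist an open subgroup `H ≤ G` and a
continuous homomorphism `ρ_{1/d} : H → ℚ_p^×` with `ρ_{1/d}(σ)^d = ρ(σ)` for all
`σ ∈ H`. -/
theorem exists_continuous_dth_root_of_character
    (p : ℕ) [Fact p.Prime]
    (G : Type*) [Group G] [TopologicalSpace G] [IsTopologicalGroup G]
    [CompactSpace G] [TotallyDisconnectedSpace G] [T2Space G]
    (ρ : G →* ℤ_[p]ˣ) (hρ : Continuous ρ) (d : ℕ) (hd : 1 ≤ d) :
    ∃ H : Subgroup G, IsOpen (H : Set G) ∧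
      ∃ f : H →* ℚ_[p]ˣ, Continuous f ∧
        ∀ σ : H,
          (f σ) ^ d =
            Units.map (PadicInt.Coe.ringHom : ℤ_[p] →+* ℚ_[p]).toMonoidHom
              (ρ (σ : G)) :=
  exists_continuous_dth_root_of_character_general p G ρ hρ d hd
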